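/- Let Λ(γ) = M0 + Σj Mj*γj be an LME closed under multiplication, let D ⊆ ℝ^k be a bounded polytope with vertex set {γ1,...,γM}, let θ ⊆ ℝ^n be an initial set, and t ≥ 0. Define RS_i = {exp(Λ(γi)·t)·x0 : x0 ∈ θ}. Then for every γ ∈ D and x0 ∈ θ, the point exp(Λ(γ)·t)·x0 lies in the convex hull of RS_1 ∪ ... ∪ RS_M; i.e., the convex hull of the vertex reachable sets contains the reachable set for every dynamics sampled from D. -/

import Mathlib

open Matrix

noncomputable def supp {n : ℕ} (M : Matrix (Fin n) (Fin n) ℝ) : Matrix (Fin n) (Fin n) Bool :=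
  fun i j => decide (M i j ≠ 0)

def bmul {n : ℕ} (A B : Matrix (Fin n) (Fin n) Bool) : Matrix (Fin n) (Fin n) Bool :=
  fun i j => decide (∃ l, A i l = true ∧ B l j = true)

def ble {n : ℕ} (A B : Matrix (Fin n) (Fin n) Bool) : Prop :=
  ∀ i j, B i j = false → A i j = false

/-!
The support conditions force `Mⱼ * M₀ ^ b * Mₗ = 0`, so with `A = t • M₀` every word in
`A + B(γ) = t • Λ(γ)` containing two factors `B(γ)` vanishes. Hence `(A + B) ^ m` is `A ^ m` plus a
term linear in `B`, and summing the exponential series shows that `γ ↦ exp (t • Λ(γ))` preserves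
affine combinations. The set of `γ` whose reachable point lies in the convex hull of the vertex
reachable sets is therefore convex, and it contains every vertex.
-/

open NormedSpace Finset Submodule

theorem add_pow_eq_add_sum_of_mul_pow_mul_eq_zero {R : Type*} [Semiring R] {A B : R}
    (h : ∀ b, B * A ^ b * B = 0) (m : ℕ) :
    (A + B) ^ m = A ^ m + ∑ x ∈ range m, A ^ x * B * A ^ (m - 1 - x) := by
  induction m with
  | zero => simp
  | succ m ih =>
    have hB : (∑ x ∈ range m, A ^ x * B * A ^ (m - 1 - x)) * B = 0 := by
      rw [sum_mul]
      exact sum_eq_zero fun x _ => by rw [mul_assoc, mul_assoc, ← mul_assoc B, h, mul_zero]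
    have hA : (∑ x ∈ range m, A ^ x * B * A ^ (m - 1 - x)) * A
        = ∑ x ∈ range m, A ^ x * B * A ^ (m + 1 - 1 - x) := by
      rw [sum_mul]
      refine sum_congr rfl fun x hx => ?_
      rw [mul_assoc, ← pow_succ]
      have := mem_range.1 hx
      congr 2
      omega
    rw [pow_succ, ih, add_mul, mul_add, mul_add, hB, hA, sum_range_succ, ← pow_succ]
    simp only [add_zero, Nat.add_sub_cancel, Nat.sub_self, pow_zero, mul_one]
    abel

theorem mul_mul_eq_zero_of_mem_span {𝕜 R : Type*} [CommSemiring 𝕜] [Semiring R] [Algebra 𝕜 R]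
    {s : Set R} {c x y : R}
    (h : ∀ x ∈ s, ∀ y ∈ s, x * c * y = 0) (hx : x ∈ span 𝕜 s) (hy : y ∈ span 𝕜 s) :
    x * c * y = 0 := by
  have hxs : ∀ y ∈ s, x * c * y = 0 := fun y hys => by
    have : span 𝕜 s ≤ LinearMap.ker (LinearMap.mulRight 𝕜 (c * y)) :=
      span_le.2 fun x' hx's => by simpa [mul_assoc] using h x' hx's y hys
    simpa [mul_assoc] using this hx
  have : span 𝕜 s ≤ LinearMap.ker (LinearMap.mulLeft 𝕜 (x * c)) := span_le.2 hxs
  exact this hy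

theorem add_smul_add_smul_pow_of_mul_pow_mul_eq_zero {𝕜 R : Type*} [CommRing 𝕜] [Ring R]
    [Algebra 𝕜 R] {A B C : R} {N : Submodule 𝕜 R}
    (hN : ∀ x ∈ N, ∀ y ∈ N, ∀ b, x * A ^ b * y = 0) (hB : B ∈ N) (hC : C ∈ N) {a c : 𝕜}
    (hac : a + c = 1) (m : ℕ) : (A + (a • B + c • C)) ^ m = a • (A + B) ^ m + c • (A + C) ^ m := by
  have hBC : a • B + c • C ∈ N := N.add_mem (N.smul_mem a hB) (N.smul_mem c hC)
  rw [add_pow_eq_add_sum_of_mul_pow_mul_eq_zero (hN _ hBC _ hBC),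
    add_pow_eq_add_sum_of_mul_pow_mul_eq_zero (hN _ hB _ hB),
    add_pow_eq_add_sum_of_mul_pow_mul_eq_zero (hN _ hC _ hC)]
  simp only [mul_add, add_mul, mul_smul_comm, smul_mul_assoc, sum_add_distrib, ← smul_sum]
  obtain rfl : c = 1 - a := eq_sub_of_add_eq' hac
  module

theorem exp_add_smul_add_smul_of_mul_pow_mul_eq_zero {𝕂 𝔸 : Type*} [RCLike 𝕂] [NormedRing 𝔸]
    [NormedAlgebra 𝕂 𝔸] [CompleteSpace 𝔸] {A B C : 𝔸} {N : Submodule 𝕂 𝔸}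
    (hN : ∀ x ∈ N, ∀ y ∈ N, ∀ b, x * A ^ b * y = 0) (hB : B ∈ N) (hC : C ∈ N) {a c : 𝕂}
    (hac : a + c = 1) : exp (A + (a • B + c • C)) = a • exp (A + B) + c • exp (A + C) := by
  simp only [exp_eq_tsum 𝕂, add_smul_add_smul_pow_of_mul_pow_mul_eq_zero hN hB hC hac, smul_add,
    smul_comm _ a, smul_comm _ c]
  rw [Summable.tsum_add ((expSeries_summable' _).const_smul a)
      ((expSeries_summable' _).const_smul c),
    Summable.tsum_const_smul _ (expSeries_summable' _),
    Summable.tsum_const_smul _ (expSeries_summable' _)]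

section SupportPattern

variable {n : ℕ}

theorem ble_refl (A : Matrix (Fin n) (Fin n) Bool) : ble A A := fun _ _ h => h

theorem ble_trans {A B C : Matrix (Fin n) (Fin n) Bool} (hAB : ble A B) (hBC : ble B C) :
    ble A C :=
  fun i j h => hAB i j (hBC i j h)

theorem ble.apply_eq_true {A B : Matrix (Fin n) (Fin n) Bool} (h : ble A B) {i j : Fin n}
    (hA : A i j = true) : B i j = true := by
  simpa using mt (h i j) (by simp [hA])

theorem bmul_mono {A A' B B' : Matrix (Fin n) (Fin n) Bool} (hA : ble A A') (hB : ble B B') :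
    ble (bmul A B) (bmul A' B') := by
  intro i j h
  simp only [bmul, decide_eq_false_iff_not, not_exists, not_and] at h ⊢
  exact fun l hAl hBl => h l (hA.apply_eq_true hAl) (hB.apply_eq_true hBl)

theorem ble_supp_mul (X Y : Matrix (Fin n) (Fin n) ℝ) :
    ble (supp (X * Y)) (bmul (supp X) (supp Y)) := by
  intro i j h
  simp only [bmul, supp, decide_eq_false_iff_not, not_exists, not_and, decide_eq_true_eq,
    not_not] at h ⊢
  rw [mul_apply]
  refine sum_eq_zero fun l _ => ?_
  by_cases hX : X i l = 0
  · simp [hX]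
  · simp [h l hX]

theorem eq_zero_of_ble_supp_false {X : Matrix (Fin n) (Fin n) ℝ}
    (h : ble (supp X) fun _ _ => false) : X = 0 := by
  ext i j
  simpa [supp] using h i j rfl

theorem ble_supp_mul_pow {X C : Matrix (Fin n) (Fin n) ℝ}
    (h : ble (bmul (supp X) (supp C)) (supp X)) (b : ℕ) : ble (supp (X * C ^ b)) (supp X) := by
  induction b with
  | zero => simpa using ble_refl (supp X)
  | succ b ih =>
    rw [pow_succ, ← mul_assoc]
    exact ble_trans (ble_trans (ble_supp_mul _ _) (bmul_mono ih (ble_refl _))) h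

theorem mul_pow_mul_eq_zero_of_ble {X Y C : Matrix (Fin n) (Fin n) ℝ}
    (hXC : ble (bmul (supp X) (supp C)) (supp X))
    (hXY : bmul (supp X) (supp Y) = fun _ _ => false)
    (b : ℕ) : X * C ^ b * Y = 0 :=
  eq_zero_of_ble_supp_false <|
    ble_trans (ble_supp_mul _ _) (hXY ▸ bmul_mono (ble_supp_mul_pow hXC b) (ble_refl _))

end SupportPattern

theorem exp_smul_lme_smul_add_smul {n k : ℕ} (M0 : Matrix (Fin n) (Fin n) ℝ)
    (M : Fin k → Matrix (Fin n) (Fin n) ℝ)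
    (h2 : ∀ j, ble (bmul (supp (M j)) (supp M0)) (supp (M j)))
    (h3 : ∀ j l, bmul (supp (M j)) (supp (M l)) = fun _ _ => false)
    (t : ℝ) (x y : Fin k → ℝ) {a c : ℝ} (hac : a + c = 1) :
    exp (t • (M0 + ∑ j, (a • x + c • y) j • M j)) =
      a • exp (t • (M0 + ∑ j, x j • M j)) + c • exp (t • (M0 + ∑ j, y j • M j)) := by
  -- `exp` only sees the topology, so any submultiplicative norm gives access to its series.
  let : NormedRing (Matrix (Fin n) (Fin n) ℝ) := Matrix.linftyOpNormedRing
  let : NormedAlgebra ℝ (Matrix (Fin n) (Fin n) ℝ) := Matrix.linftyOpNormedAlgebra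
  have hN : ∀ X ∈ span ℝ (Set.range M), ∀ Y ∈ span ℝ (Set.range M), ∀ b,
      X * (t • M0) ^ b * Y = 0 := by
    intro X hX Y hY b
    rw [smul_pow, mul_smul_comm, smul_mul_assoc, mul_mul_eq_zero_of_mem_span ?_ hX hY, smul_zero]
    rintro _ ⟨j, rfl⟩ _ ⟨l, rfl⟩
    exact mul_pow_mul_eq_zero_of_ble (h2 j) (h3 j l) b
  have hmem (γ : Fin k → ℝ) : t • ∑ j, γ j • M j ∈ span ℝ (Set.range M) :=
    smul_mem _ t (sum_mem fun j _ => smul_mem _ _ (subset_span ⟨j, rfl⟩))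
  have hcomb : t • ∑ j, (a • x + c • y) j • M j
      = a • (t • ∑ j, x j • M j) + c • (t • ∑ j, y j • M j) := by
    simp only [Pi.add_apply, Pi.smul_apply, smul_eq_mul, add_smul, mul_smul, sum_add_distrib,
      ← smul_sum]
    module
  simp only [smul_add, hcomb]
  exact exp_add_smul_add_smul_of_mul_pow_mul_eq_zero hN (hmem x) (hmem y) hac

theorem convexHull_vertex_reach_sets_contains_reach_set_general {n k p : ℕ}
    (M0 : Matrix (Fin n) (Fin n) ℝ) (M : Fin k → Matrix (Fin n) (Fin n) ℝ)
    (h2 : ∀ j, ble (bmul (supp (M j)) (supp M0)) (supp (M j)))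
    (h3 : ∀ j l, bmul (supp (M j)) (supp (M l)) = fun _ _ => false)
    (V : Fin p → (Fin k → ℝ))   -- the vertices of the polytope D
    (θ : Set (Fin n → ℝ))       -- the initial set
    (t : ℝ)
    (RS : Fin p → Set (Fin n → ℝ))
    (hRS : ∀ i, RS i =
      (fun x0 => (NormedSpace.exp (t • (M0 + ∑ j, V i j • M j))).mulVec x0) '' θ) :
    ∀ γ ∈ convexHull ℝ (Set.range V), ∀ x0 ∈ θ,
      (NormedSpace.exp (t • (M0 + ∑ j, γ j • M j))).mulVec x0
        ∈ convexHull ℝ (⋃ i, RS i) := by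
  intro γ hγ x0 hx0
  let reach (γ : Fin k → ℝ) := (exp (t • (M0 + ∑ j, γ j • M j))).mulVec x0
  have hconvex : Convex ℝ (reach ⁻¹' convexHull ℝ (⋃ i, RS i)) := by
    intro x hx y hy a c ha hc hac
    simp only [Set.mem_preimage, reach, exp_smul_lme_smul_add_smul M0 M h2 h3 t x y hac,
      add_mulVec, smul_mulVec]
    exact convex_convexHull ℝ _ hx hy ha hc hac
  have hvertices : Set.range V ⊆ reach ⁻¹' convexHull ℝ (⋃ i, RS i) := by
    rintro _ ⟨i, rfl⟩
    exact subset_convexHull ℝ _ (Set.mem_iUnion.2 ⟨i, hRS i ▸ ⟨x0, hx0, rfl⟩⟩)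
  exact convexHull_min hvertices hconvex hγ

theorem convexHull_vertex_reach_sets_contains_reach_set {n k p : ℕ}
    (M0 : Matrix (Fin n) (Fin n) ℝ) (M : Fin k → Matrix (Fin n) (Fin n) ℝ)
    (h0 : ble (bmul (supp M0) (supp M0)) (supp M0))
    (h1 : ∀ j, ble (bmul (supp M0) (supp (M j))) (supp (M j)))
    (h2 : ∀ j, ble (bmul (supp (M j)) (supp M0)) (supp (M j)))
    (h3 : ∀ j l, bmul (supp (M j)) (supp (M l)) = fun _ _ => false)
    (V : Fin p → (Fin k → ℝ))   -- the vertices of the polytope D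
    (θ : Set (Fin n → ℝ))       -- the initial set
    (t : ℝ) (ht : 0 ≤ t)
    (RS : Fin p → Set (Fin n → ℝ))
    (hRS : ∀ i, RS i =
      (fun x0 => (NormedSpace.exp (t • (M0 + ∑ j, V i j • M j))).mulVec x0) '' θ) :
    ∀ γ ∈ convexHull ℝ (Set.range V), ∀ x0 ∈ θ,
      (NormedSpace.exp (t • (M0 + ∑ j, γ j • M j))).mulVec x0
        ∈ convexHull ℝ (⋃ i, RS i) :=
  convexHull_vertex_reach_sets_contains_reach_set_general M0 M h2 h3 V θ t RS hRS
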